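/- arXiv:1107.3215 — 3 statements merged into one kernel-verified Lean document; each statement's English description precedes it below -/
import Mathlib

section
/- Let (λ_n)_{n≥1} be a sequence in [0,1] and (a_n), (b_n) sequences of nonnegative reals with a_{n+1} ≤ (1 − λ_{n+1})·a_n + b_n for all n ≥ 1. Suppose (a_n) is bounded above by M ∈ ℤ₊, ∑ b_n converges with Cauchy modulus γ (i.e. s_{γ(δ)+n} − s_{γ(δ)} ≤ δ for all δ > 0 and n ∈ ℕ, where s_n = ∑_{i=1}^n b_i), and ∑_{n=1}^∞ λ_{n+1} diverges with rate of divergence θ. Then for all ε ∈ (0,2) and all n ≥ θ(γ(ε/2) + 1 + ⌈ln(2M/ε)⌉) + 1, we have a_n ≤ ε. -/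
/-!
Iterating the recursion from `N + 1 = γ(ε/2) + 1` on gives
`a (n+1) ≤ (∏_{N < k ≤ n} (1 - λ_{k+1})) · M + ∑_{N < k ≤ n} b_k`.
The sum is a tail of `∑ b` beyond `γ(ε/2)`, hence at most `ε/2`. Since every `λ_k ≤ 1`, the rate
`θ` forces `∑_{N < k ≤ θ(N+1+L)} λ_{k+1} ≥ L = ⌈ln(2M/ε)⌉`, so by `1 - x ≤ e^{-x}` the product
is at most `e^{-L} ≤ ε/(2M)`.
-/

open Finset Real

lemma prod_one_sub_le_exp_neg_sum {ι : Type*} (s : Finset ι) {f : ι → ℝ}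
    (hf : ∀ i ∈ s, f i ≤ 1) : ∏ i ∈ s, (1 - f i) ≤ exp (-∑ i ∈ s, f i) := by
  rw [← sum_neg_distrib, exp_sum]
  exact prod_le_prod (fun i hi => sub_nonneg.2 (hf i hi)) fun i _ => one_sub_le_exp_neg _

lemma exp_neg_natCeil_log_le {x : ℝ} (hx : 0 < x) : exp (-⌈log x⌉₊) ≤ x⁻¹ := by
  rw [← exp_log (inv_pos.2 hx), log_inv, exp_le_exp, neg_le_neg_iff]
  exact Nat.le_ceil _

lemma sum_Icc_one_add_sum_Ioc {M : Type*} [AddCommMonoid M] (f : ℕ → M) {m n : ℕ} (h : m ≤ n) :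
    ∑ i ∈ Icc 1 m, f i + ∑ i ∈ Ioc m n, f i = ∑ i ∈ Icc 1 n, f i := by
  rw [← zero_add 1, Icc_add_one_left_eq_Ioc, Icc_add_one_left_eq_Ioc]
  exact sum_Ioc_consecutive f m.zero_le h

lemma sum_Icc_one_le {f : ℕ → ℝ} (hf : ∀ k, f k ≤ 1) (m : ℕ) : ∑ k ∈ Icc 1 m, f k ≤ m := by
  simpa using sum_le_sum fun k (_ : k ∈ Icc 1 m) => hf k

lemma le_prod_one_sub_mul_add_sum {lam a b : ℕ → ℝ} {m : ℕ}
    (hlam : ∀ k, m < k → lam (k + 1) ∈ Set.Icc (0 : ℝ) 1) (hb : ∀ k, m < k → 0 ≤ b k)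
    (hrec : ∀ k, m < k → a (k + 1) ≤ (1 - lam (k + 1)) * a k + b k) {n : ℕ} (hmn : m ≤ n) :
    a (n + 1) ≤ (∏ k ∈ Ioc m n, (1 - lam (k + 1))) * a (m + 1) + ∑ k ∈ Ioc m n, b k := by
  induction n, hmn using Nat.le_induction with
  | base => simp
  | succ n hmn ih =>
    obtain ⟨hl0, hl1⟩ := hlam (n + 1) (by omega)
    have hS : 0 ≤ ∑ k ∈ Ioc m n, b k := sum_nonneg fun k hk => hb k (mem_Ioc.1 hk).1
    rw [prod_Ioc_succ_top hmn, sum_Ioc_succ_top hmn]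
    calc a (n + 1 + 1) ≤ (1 - lam (n + 1 + 1)) * a (n + 1) + b (n + 1) := hrec _ (by omega)
      _ ≤ (1 - lam (n + 1 + 1)) * ((∏ k ∈ Ioc m n, (1 - lam (k + 1))) * a (m + 1)
            + ∑ k ∈ Ioc m n, b k) + b (n + 1) := by gcongr
      _ ≤ _ := by nlinarith [mul_nonneg hl0 hS]

theorem stmt4_general (lam a b : ℕ → ℝ) (M : ℕ) (hM : 0 < M) (γ : ℝ → ℕ) (θ : ℕ → ℕ)
    (hlam : ∀ n, 1 ≤ n → lam n ∈ Set.Icc (0:ℝ) 1)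
    (hb0 : ∀ n, 1 ≤ n → 0 ≤ b n)
    (haM : ∀ n, 1 ≤ n → a n ≤ M)
    (hrec : ∀ n, 1 ≤ n → a (n+1) ≤ (1 - lam (n+1)) * a n + b n)
    (hγ : ∀ δ : ℝ, 0 < δ → ∀ n : ℕ,
      (∑ i ∈ Finset.Icc 1 (γ δ + n), b i) - (∑ i ∈ Finset.Icc 1 (γ δ), b i) ≤ δ)
    (hθ : ∀ n : ℕ, 1 ≤ n → (n : ℝ) ≤ ∑ k ∈ Finset.Icc 1 (θ n), lam (k+1)) :
    ∀ ε : ℝ, ε ∈ Set.Ioo (0:ℝ) 2 →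
      ∀ n, θ (γ (ε/2) + 1 + ⌈Real.log (2 * M / ε)⌉₊) + 1 ≤ n → a n ≤ ε := by
  rintro ε ⟨hε, -⟩ n hn
  obtain ⟨n, rfl⟩ := Nat.exists_eq_add_one_of_ne_zero (by omega : n ≠ 0)
  set N := γ (ε / 2)
  set L := ⌈log (2 * M / ε)⌉₊
  set m := θ (N + 1 + L)
  have hlam' (k : ℕ) : lam (k + 1) ∈ Set.Icc (0 : ℝ) 1 := hlam _ (by omega)
  have hθm : (N + 1 + L : ℝ) ≤ ∑ k ∈ Icc 1 m, lam (k + 1) := by exact_mod_cast hθ _ (by omega)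
  have hNm : N ≤ m := by
    have := sum_Icc_one_le (fun k => (hlam' k).2) m
    exact_mod_cast (show (N : ℝ) ≤ m by linarith)
  have hL : (L : ℝ) ≤ ∑ k ∈ Ioc N m, lam (k + 1) := by
    linarith [sum_Icc_one_add_sum_Ioc (fun k => lam (k + 1)) hNm,
      sum_Icc_one_le (fun k => (hlam' k).2) N]
  have hprod : ∏ k ∈ Ioc N n, (1 - lam (k + 1)) ≤ ε / (2 * M) := calc
    _ ≤ ∏ k ∈ Ioc N m, (1 - lam (k + 1)) :=
      prod_le_prod_of_subset_of_le_one (Ioc_subset_Ioc_right (by omega))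
        (fun k _ => sub_nonneg.2 (hlam' k).2) fun k _ _ => by linarith [(hlam' k).1]
    _ ≤ exp (-L) := (prod_one_sub_le_exp_neg_sum _ fun k _ => (hlam' k).2).trans
      (exp_le_exp.2 (neg_le_neg hL))
    _ ≤ ε / (2 * M) := by simpa using exp_neg_natCeil_log_le (by positivity : 0 < 2 * M / ε)
  have hsum : ∑ k ∈ Ioc N n, b k ≤ ε / 2 := by
    have := hγ (ε / 2) (by positivity) (n - N)
    rw [Nat.add_sub_cancel' (by omega)] at this
    linarith [sum_Icc_one_add_sum_Ioc b (show N ≤ n by omega)]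
  have hiter := le_prod_one_sub_mul_add_sum (fun k _ => hlam' k) (fun k _ => hb0 k (by omega))
    (fun k _ => hrec k (by omega)) (show N ≤ n by omega)
  have hP : 0 ≤ ∏ k ∈ Ioc N n, (1 - lam (k + 1)) := prod_nonneg fun k _ => sub_nonneg.2 (hlam' k).2
  calc a (n + 1) ≤ ε / (2 * M) * M + ε / 2 := by
        nlinarith [haM (N + 1) (by omega), mul_le_mul_of_nonneg_right hprod (Nat.cast_nonneg M)]
    _ = ε := by field_simp; ring

theorem stmt4 (lam a b : ℕ → ℝ) (M : ℕ) (hM : 0 < M) (γ : ℝ → ℕ) (θ : ℕ → ℕ)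
    (hlam : ∀ n, 1 ≤ n → lam n ∈ Set.Icc (0:ℝ) 1)
    (ha0 : ∀ n, 1 ≤ n → 0 ≤ a n) (hb0 : ∀ n, 1 ≤ n → 0 ≤ b n)
    (haM : ∀ n, 1 ≤ n → a n ≤ M)
    (hrec : ∀ n, 1 ≤ n → a (n+1) ≤ (1 - lam (n+1)) * a n + b n)
    (hγ : ∀ δ : ℝ, 0 < δ → ∀ n : ℕ,
      (∑ i ∈ Finset.Icc 1 (γ δ + n), b i) - (∑ i ∈ Finset.Icc 1 (γ δ), b i) ≤ δ)
    (hθ : ∀ n : ℕ, 1 ≤ n → (n : ℝ) ≤ ∑ k ∈ Finset.Icc 1 (θ n), lam (k+1)) :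
    ∀ ε : ℝ, ε ∈ Set.Ioo (0:ℝ) 2 →
      ∀ n, θ (γ (ε/2) + 1 + ⌈Real.log (2 * M / ε)⌉₊) + 1 ≤ n → a n ≤ ε :=
  stmt4_general lam a b M hM γ θ hlam hb0 haM hrec hγ hθ
end

section
/- Let C be a bounded convex subset with diameter at most M ∈ ℤ₊ of a W-hyperbolic space, T : C → C nonexpansive, and (x_n) the Halpern iteration with λ_n = 1/(n+1). Then for all ε ∈ (0,1): d(x_n, x_{n+1}) ≤ ε for all n ≥ ⌈2M/ε + 8M²/ε²⌉ − 1, and d(x_n, Tx_n) ≤ ε for all n ≥ ⌈4M/ε + 16M²/ε²⌉ − 1. -/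
structure WHyperbolic (X : Type*) [MetricSpace X] where
  W : X → X → ℝ → X
  W1 : ∀ (x y z : X) (l : ℝ), l ∈ Set.Icc (0:ℝ) 1 →
    dist z (W x y l) ≤ (1 - l) * dist z x + l * dist z y
  W2 : ∀ (x y : X) (l l' : ℝ), l ∈ Set.Icc (0:ℝ) 1 → l' ∈ Set.Icc (0:ℝ) 1 →
    dist (W x y l) (W x y l') = |l - l'| * dist x y
  W3 : ∀ (x y : X) (l : ℝ), l ∈ Set.Icc (0:ℝ) 1 → W x y l = W y x (1 - l)
  W4 : ∀ (x y z w : X) (l : ℝ), l ∈ Set.Icc (0:ℝ) 1 →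
    dist (W x z l) (W y w l) ≤ (1 - l) * dist x y + l * dist z w


/-
Write `d n = d(x n, x (n+1))`. Axioms (W4) and (W2), nonexpansiveness of `T` and the diameter bound
give `(n + 2) d (n + 1) ≤ (n + 1) d n + M / (n + 3)`. Telescoping from any `m` (and `d n ≤ M` when
`m > n`) yields `d n ≤ (m + 1) M / (n + 1) + M / (m + 3)`, and `m = ⌈2M/ε⌉` (resp. `⌈4M/ε⌉`) turns
this into the first rate. By (W2), `d(x (n+1), T (x n)) = d(u, T (x n)) / (n + 2) ≤ M / (n + 2)`,
so the triangle inequality gives the second rate.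
-/

open Set

namespace WHyperbolic

variable {X : Type*} [MetricSpace X] (H : WHyperbolic X)

theorem W_one (x y : X) : H.W x y 1 = y := by
  have h := H.W1 x y y 1 (by norm_num)
  rw [sub_self, zero_mul, zero_add, one_mul, dist_self] at h
  exact (dist_le_zero.mp h).symm

theorem dist_W_right (x y : X) {l : ℝ} (hl : l ∈ Icc (0 : ℝ) 1) :
    dist (H.W x y l) y = (1 - l) * dist x y := by
  have h := H.W2 x y l 1 hl (by norm_num)
  rwa [W_one, abs_sub_comm, abs_of_nonneg (by linarith [hl.2])] at h

theorem dist_W_W_le (u a b : X) {l l' : ℝ} (hl : l ∈ Icc (0 : ℝ) 1) (hl' : l' ∈ Icc (0 : ℝ) 1) :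
    dist (H.W u a l) (H.W u b l') ≤ l * dist a b + |l - l'| * dist u b := by
  have h₁ := H.W4 u u a b l hl
  rw [dist_self, mul_zero, zero_add] at h₁
  calc dist (H.W u a l) (H.W u b l')
      ≤ dist (H.W u a l) (H.W u b l) + dist (H.W u b l) (H.W u b l') := dist_triangle _ _ _
    _ ≤ l * dist a b + |l - l'| * dist u b := by rw [H.W2 u b l l' hl hl']; gcongr

end WHyperbolic

theorem one_sub_one_div_add_two_mem_Icc (n : ℕ) : 1 - 1 / ((n : ℝ) + 2) ∈ Icc (0 : ℝ) 1 := by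
  have h : 1 / ((n : ℝ) + 2) ≤ 1 := by rw [div_le_one (by positivity)]; linarith
  constructor <;> linarith [show (0 : ℝ) ≤ 1 / ((n : ℝ) + 2) by positivity]

section Halpern

variable {X : Type*} [MetricSpace X] (H : WHyperbolic X)

theorem halpern_mem {C : Set X}
    (hconv : ∀ x ∈ C, ∀ y ∈ C, ∀ l : ℝ, l ∈ Icc (0:ℝ) 1 → H.W x y l ∈ C)
    {T : X → X} (hTC : ∀ x ∈ C, T x ∈ C) {u : X} (hu : u ∈ C) {x : ℕ → X} (hx0 : x 0 ∈ C)
    (hiter : ∀ n : ℕ, x (n+1) = H.W u (T (x n)) (1 - 1 / ((n:ℝ) + 2))) (n : ℕ) : x n ∈ C := by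
  induction n with
  | zero => exact hx0
  | succ n ih => rw [hiter n]; exact hconv u hu _ (hTC _ ih) _ (one_sub_one_div_add_two_mem_Icc n)

theorem halpern_dist_T_eq {T : X → X} {u : X} {x : ℕ → X} (n : ℕ)
    (hn : x (n+1) = H.W u (T (x n)) (1 - 1 / ((n:ℝ) + 2))) :
    dist (x (n+1)) (T (x n)) = dist u (T (x n)) / ((n : ℝ) + 2) := by
  rw [hn, H.dist_W_right _ _ (one_sub_one_div_add_two_mem_Icc n)]
  ring

theorem halpern_weighted_dist_succ_le {T : X → X} {u : X} {x : ℕ → X}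
    (hiter : ∀ n : ℕ, x (n+1) = H.W u (T (x n)) (1 - 1 / ((n:ℝ) + 2))) {M : ℝ} (n : ℕ)
    (hT : dist (T (x n)) (T (x (n+1))) ≤ dist (x n) (x (n+1)))
    (hM : dist u (T (x (n+1))) ≤ M) :
    ((n : ℝ) + 2) * dist (x (n+1)) (x (n+2)) ≤
      ((n : ℝ) + 1) * dist (x n) (x (n+1)) + M / ((n : ℝ) + 3) := by
  have hn2 : x (n+2) = H.W u (T (x (n+1))) (1 - 1 / ((n:ℝ) + 3)) := by
    rw [hiter (n+1)]; push_cast; ring_nf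
  have hl : 1 - 1 / ((n:ℝ) + 2) ∈ Icc (0:ℝ) 1 := one_sub_one_div_add_two_mem_Icc n
  have hl' : 1 - 1 / ((n:ℝ) + 3) ∈ Icc (0:ℝ) 1 := by
    convert one_sub_one_div_add_two_mem_Icc (n+1) using 3; push_cast; ring
  have hgap : 0 ≤ 1 / ((n:ℝ) + 2) - 1 / ((n:ℝ) + 3) := by
    rw [sub_nonneg]; gcongr; linarith
  have hstep := H.dist_W_W_le u (T (x n)) (T (x (n+1))) hl hl'
  rw [← hiter n, ← hn2, abs_sub_comm, sub_sub_sub_cancel_left, abs_of_nonneg hgap] at hstep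
  calc ((n : ℝ) + 2) * dist (x (n+1)) (x (n+2))
      ≤ ((n : ℝ) + 2) * ((1 - 1 / ((n:ℝ) + 2)) * dist (x n) (x (n+1))
          + (1 / ((n:ℝ) + 2) - 1 / ((n:ℝ) + 3)) * M) := by
        gcongr
        refine hstep.trans ?_
        gcongr
        exact hl.1
    _ = ((n : ℝ) + 1) * dist (x n) (x (n+1)) + M / ((n : ℝ) + 3) := by field_simp; ring

end Halpern

theorem le_of_weighted_recurrence {a : ℕ → ℝ} {M : ℝ} (hM : 0 ≤ M) (ha : ∀ n, a n ≤ M)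
    (hrec : ∀ n : ℕ, ((n : ℝ) + 2) * a (n+1) ≤ ((n : ℝ) + 1) * a n + M / ((n : ℝ) + 3))
    (m n : ℕ) : a n ≤ ((m : ℝ) + 1) * M / ((n : ℝ) + 1) + M / ((m : ℝ) + 3) := by
  set c := M / ((m : ℝ) + 3) with hc_def
  have hc : 0 ≤ c := by positivity
  rcases le_or_gt m n with hmn | hnm
  · have hanti : AntitoneOn (fun k : ℕ => ((k : ℝ) + 1) * a k - k * c) (Ici m) :=
      antitoneOn_nat_Ici_of_succ_le fun k hk => by
        have : M / ((k : ℝ) + 3) ≤ c := by rw [hc_def]; gcongr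
        push_cast
        linarith [hrec k]
    have htele : ((n : ℝ) + 1) * a n - n * c ≤ ((m : ℝ) + 1) * a m - m * c :=
      hanti self_mem_Ici hmn hmn
    have ham : ((m : ℝ) + 1) * a m ≤ ((m : ℝ) + 1) * M := by gcongr; exact ha m
    have hbound : ((n : ℝ) + 1) * a n ≤ ((m : ℝ) + 1) * M + ((n : ℝ) + 1) * c := by
      nlinarith [(m.cast_nonneg : (0 : ℝ) ≤ m)]
    calc a n = ((n : ℝ) + 1) * a n / ((n : ℝ) + 1) := by field_simp
      _ ≤ (((m : ℝ) + 1) * M + ((n : ℝ) + 1) * c) / ((n : ℝ) + 1) := by gcongr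
      _ = ((m : ℝ) + 1) * M / ((n : ℝ) + 1) + c := by field_simp
  · have hM' : M ≤ ((m : ℝ) + 1) * M / ((n : ℝ) + 1) := by
      rw [le_div_iff₀ (by positivity)]
      have : (n : ℝ) + 1 ≤ (m : ℝ) + 1 := by exact_mod_cast Nat.succ_le_succ hnm.le
      nlinarith
    linarith [ha n]

theorem bound_at_ceil_le {M ε k : ℝ} (hM : 0 ≤ M) (hε : 0 < ε) (hk : 0 < k) {n : ℕ}
    (hn : 2 * M / ε * (k * M / ε + 2) ≤ n + 1) :
    ((⌈k * M / ε⌉₊ : ℝ) + 1) * M / ((n : ℝ) + 1) + M / ((⌈k * M / ε⌉₊ : ℝ) + 3) ≤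
      ε / 2 + ε / k := by
  set m := ⌈k * M / ε⌉₊
  have hm₁ : k * M / ε ≤ m := Nat.le_ceil _
  have hm₂ : (m : ℝ) < k * M / ε + 1 := Nat.ceil_lt_add_one (by positivity)
  gcongr ?_ + ?_
  · rw [div_le_iff₀ (by positivity)]
    calc ((m : ℝ) + 1) * M ≤ (k * M / ε + 2) * M := mul_le_mul_of_nonneg_right (by linarith) hM
      _ = ε / 2 * (2 * M / ε * (k * M / ε + 2)) := by field_simp
      _ ≤ ε / 2 * (n + 1) := by gcongr
  · rw [div_le_div_iff₀ (by positivity) hk]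
    rw [div_le_iff₀ hε] at hm₁
    linarith

theorem le_add_one_of_ceil_sub_one_le {r : ℝ} {n : ℕ} (h : ⌈r⌉₊ - 1 ≤ n) : r ≤ n + 1 := by
  exact_mod_cast Nat.ceil_le.mp (by omega : ⌈r⌉₊ ≤ n + 1)

theorem natCast_div_le_sq_div (M : ℕ) {ε : ℝ} (hε₀ : 0 < ε) (hε₁ : ε ≤ 1) :
    (M : ℝ) / ε ≤ ((M : ℝ) / ε) ^ 2 := by
  have hM2 : (M : ℝ) ≤ (M : ℝ) ^ 2 := by exact_mod_cast Nat.le_self_pow two_ne_zero M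
  calc (M : ℝ) / ε ≤ M / ε ^ 2 :=
        div_le_div_of_nonneg_left M.cast_nonneg (by positivity) (by nlinarith)
    _ ≤ (M : ℝ) ^ 2 / ε ^ 2 := by gcongr
    _ = ((M : ℝ) / ε) ^ 2 := (div_pow _ _ _).symm

theorem stmt13_general {X : Type*} [MetricSpace X] (H : WHyperbolic X) (C : Set X)
    (hconv : ∀ x ∈ C, ∀ y ∈ C, ∀ l : ℝ, l ∈ Set.Icc (0:ℝ) 1 → H.W x y l ∈ C)
    (M : ℕ) (hdiam : ∀ a ∈ C, ∀ b ∈ C, dist a b ≤ M)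
    (T : X → X) (hTC : ∀ x ∈ C, T x ∈ C)
    (hT : ∀ x ∈ C, ∀ y ∈ C, dist (T x) (T y) ≤ dist x y)
    (u x0 : X) (hu : u ∈ C) (hx0 : x0 ∈ C)
    (x : ℕ → X) (hx : x 0 = x0)
    (hiter : ∀ n : ℕ, x (n+1) = H.W u (T (x n)) (1 - 1 / ((n:ℝ) + 2))) :
    ∀ ε : ℝ, ε ∈ Set.Ioo (0:ℝ) 1 →
      (∀ n : ℕ, ⌈2 * M / ε + 8 * (M:ℝ)^2 / ε^2⌉₊ - 1 ≤ n → dist (x n) (x (n+1)) ≤ ε) ∧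
      (∀ n : ℕ, ⌈4 * M / ε + 16 * (M:ℝ)^2 / ε^2⌉₊ - 1 ≤ n → dist (x n) (T (x n)) ≤ ε) := by
  rintro ε ⟨hε₀, hε₁⟩
  have hmem := halpern_mem H hconv hTC hu (hx ▸ hx0) hiter
  have hrate (m n : ℕ) :
      dist (x n) (x (n+1)) ≤ ((m : ℝ) + 1) * M / ((n : ℝ) + 1) + M / ((m : ℝ) + 3) :=
    le_of_weighted_recurrence M.cast_nonneg (fun n => hdiam _ (hmem n) _ (hmem (n+1)))
      (fun n => halpern_weighted_dist_succ_le H hiter n (hT _ (hmem n) _ (hmem (n+1)))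
        (hdiam _ hu _ (hTC _ (hmem (n+1))))) m n
  have hMε := natCast_div_le_sq_div M hε₀ hε₁.le
  constructor
  · intro n hn
    have hn' := le_add_one_of_ceil_sub_one_le hn
    have hthreshold : 2 * M / ε * (2 * M / ε + 2) ≤ n + 1 := by
      linarith [show 2 * (M : ℝ) / ε * (2 * M / ε + 2) = 4 * (M / ε) ^ 2 + 4 * (M / ε) by ring,
        show 2 * (M : ℝ) / ε + 8 * M ^ 2 / ε ^ 2 = 2 * (M / ε) + 8 * (M / ε) ^ 2 by ring]
    calc dist (x n) (x (n+1)) ≤ ε / 2 + ε / 2 :=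
          (hrate _ n).trans (bound_at_ceil_le M.cast_nonneg hε₀ two_pos hthreshold)
      _ = ε := by ring
  · intro n hn
    have hn' := le_add_one_of_ceil_sub_one_le hn
    have hthreshold : 2 * M / ε * (4 * M / ε + 2) ≤ n + 1 := by
      linarith [show 2 * (M : ℝ) / ε * (4 * M / ε + 2) = 8 * (M / ε) ^ 2 + 4 * (M / ε) by ring,
        show 4 * (M : ℝ) / ε + 16 * M ^ 2 / ε ^ 2 = 4 * (M / ε) + 16 * (M / ε) ^ 2 by ring]
    have hstep : dist (x (n+1)) (T (x n)) ≤ ε / 4 := by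
      rw [halpern_dist_T_eq H n (hiter n), div_le_iff₀ (by positivity)]
      have : 4 * (M : ℝ) ≤ ε * (n + 1) := by
        rw [← div_le_iff₀' hε₀]
        linarith [show 0 ≤ 16 * (M : ℝ) ^ 2 / ε ^ 2 by positivity]
      nlinarith [hdiam _ hu _ (hTC _ (hmem n))]
    calc dist (x n) (T (x n)) ≤ dist (x n) (x (n+1)) + dist (x (n+1)) (T (x n)) :=
          dist_triangle _ _ _
      _ ≤ (ε / 2 + ε / 4) + ε / 4 :=
          add_le_add
            ((hrate _ n).trans (bound_at_ceil_le M.cast_nonneg hε₀ four_pos hthreshold)) hstep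
      _ = ε := by ring

theorem stmt13 {X : Type*} [MetricSpace X] (H : WHyperbolic X) (C : Set X)
    (hconv : ∀ x ∈ C, ∀ y ∈ C, ∀ l : ℝ, l ∈ Set.Icc (0:ℝ) 1 → H.W x y l ∈ C)
    (M : ℕ) (hM : 0 < M) (hdiam : ∀ a ∈ C, ∀ b ∈ C, dist a b ≤ M)
    (T : X → X) (hTC : ∀ x ∈ C, T x ∈ C)
    (hT : ∀ x ∈ C, ∀ y ∈ C, dist (T x) (T y) ≤ dist x y)
    (u x0 : X) (hu : u ∈ C) (hx0 : x0 ∈ C)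
    (x : ℕ → X) (hx : x 0 = x0)
    (hiter : ∀ n : ℕ, x (n+1) = H.W u (T (x n)) (1 - 1 / ((n:ℝ) + 2))) :
    ∀ ε : ℝ, ε ∈ Set.Ioo (0:ℝ) 1 →
      (∀ n : ℕ, ⌈2 * M / ε + 8 * (M:ℝ)^2 / ε^2⌉₊ - 1 ≤ n → dist (x n) (x (n+1)) ≤ ε) ∧
      (∀ n : ℕ, ⌈4 * M / ε + 16 * (M:ℝ)^2 / ε^2⌉₊ - 1 ≤ n → dist (x n) (T (x n)) ≤ ε) :=
  stmt13_general H C hconv M hdiam T hTC hT u x0 hu hx0 x hx hiter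
end

section
/- Let X be a complete CAT(0) space, C ⊆ X bounded closed convex with diameter at most M ∈ ℤ₊, T : C → C nonexpansive, u ∈ C, and (t_k) a nonincreasing sequence in (0,1). Let z_k denote the unique fixed point of y ↦ t_k u ⊕ (1−t_k)Ty. Then for every ε > 0 and g : ℕ → ℕ there exists K₀ ≤ g̃^{(⌈M²/ε²⌉)}(0), where g̃(k) = k + g(k), such that d(z_i, z_j) ≤ ε for all i, j ∈ [K₀, K₀ + g(K₀)]. -/
/-- A CAT(0) space, presented as a W-hyperbolic space whose midpoints satisfy the
Bruhat–Tits CN-inequality. -/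
structure CAT0 (X : Type*) [MetricSpace X] extends WHyperbolic X where
  CN : ∀ x y z : X,
    dist z (W x y (1/2)) ^ 2 ≤ (1/2) * dist z x ^ 2 + (1/2) * dist z y ^ 2 - (1/4) * dist x y ^ 2

private lemma W_zero {X : Type*} [MetricSpace X] (H : CAT0 X) (x y : X) : H.W x y 0 = x := by
  have h := H.W1 x y x 0 ⟨le_refl 0, zero_le_one⟩
  have h' : dist x (H.W x y 0) ≤ 0 := by simpa using h
  exact (dist_eq_zero.mp (le_antisymm h' dist_nonneg)).symm

private lemma W_one {X : Type*} [MetricSpace X] (H : CAT0 X) (x y : X) : H.W x y 1 = y := by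
  have h := H.W1 x y y 1 ⟨zero_le_one, le_refl 1⟩
  have h' : dist y (H.W x y 1) ≤ 0 := by simpa using h
  exact (dist_eq_zero.mp (le_antisymm h' dist_nonneg)).symm

private lemma W_mid {X : Type*} [MetricSpace X] (H : CAT0 X) (x y : X) {a b : ℝ}
    (ha : a ∈ Set.Icc (0:ℝ) 1) (hb : b ∈ Set.Icc (0:ℝ) 1) :
    H.W x y ((a + b) / 2) = H.W (H.W x y a) (H.W x y b) (1/2) := by
  have hm : (a + b) / 2 ∈ Set.Icc (0:ℝ) 1 :=
    ⟨by linarith [ha.1, hb.1], by linarith [ha.2, hb.2]⟩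
  have hcn := H.CN (H.W x y a) (H.W x y b) (H.W x y ((a + b) / 2))
  rw [H.W2 x y ((a + b) / 2) a hm ha, H.W2 x y ((a + b) / 2) b hm hb,
    H.W2 x y a b ha hb, mul_pow, mul_pow, mul_pow, sq_abs, sq_abs, sq_abs] at hcn
  have h0 : dist (H.W x y ((a + b) / 2)) (H.W (H.W x y a) (H.W x y b) (1/2)) ^ 2 ≤ 0 := by
    nlinarith [hcn]
  have h1 : dist (H.W x y ((a + b) / 2)) (H.W (H.W x y a) (H.W x y b) (1/2)) ^ 2 = 0 :=
    le_antisymm h0 (sq_nonneg _)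
  have h2 : dist (H.W x y ((a + b) / 2)) (H.W (H.W x y a) (H.W x y b) (1/2)) = 0 :=
    (pow_eq_zero_iff two_ne_zero).mp h1
  exact dist_eq_zero.mp h2

private lemma icc_subset_of_midpoint_closed {S : Set ℝ} (hcl : IsClosed S)
    (h0 : (0:ℝ) ∈ S) (h1 : (1:ℝ) ∈ S)
    (hmid : ∀ a ∈ S, ∀ b ∈ S, (a + b) / 2 ∈ S) :
    Set.Icc (0:ℝ) 1 ⊆ S := by
  intro x hx
  by_contra hxS
  obtain ⟨hx0, hx1⟩ := hx
  have hAne : (S ∩ Set.Icc 0 x).Nonempty := ⟨0, h0, le_refl _, hx0⟩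
  have hBne : (S ∩ Set.Icc x 1).Nonempty := ⟨1, h1, hx1, le_refl _⟩
  have hAbdd : BddAbove (S ∩ Set.Icc 0 x) := ⟨x, fun y hy => hy.2.2⟩
  have hBbdd : BddBelow (S ∩ Set.Icc x 1) := ⟨x, fun y hy => hy.2.1⟩
  have hα : sSup (S ∩ Set.Icc 0 x) ∈ S ∩ Set.Icc 0 x :=
    (hcl.inter isClosed_Icc).csSup_mem hAne hAbdd
  have hβ : sInf (S ∩ Set.Icc x 1) ∈ S ∩ Set.Icc x 1 :=
    (hcl.inter isClosed_Icc).csInf_mem hBne hBbdd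
  set α := sSup (S ∩ Set.Icc 0 x)
  set β := sInf (S ∩ Set.Icc x 1)
  have hαx : α < x := lt_of_le_of_ne hα.2.2 (fun h => hxS (h ▸ hα.1))
  have hxβ : x < β := lt_of_le_of_ne hβ.2.1 (fun h => hxS (h ▸ hβ.1))
  have hmS : (α + β) / 2 ∈ S := hmid _ hα.1 _ hβ.1
  rcases le_or_gt ((α + β) / 2) x with h | h
  · have : (α + β) / 2 ≤ α :=
      le_csSup hAbdd ⟨hmS, by constructor <;> linarith [hα.2.1]⟩
    linarith
  · have : β ≤ (α + β) / 2 :=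
      csInf_le hBbdd ⟨hmS, by constructor <;> linarith [hβ.2.2]⟩
    linarith

private lemma CNgen {X : Type*} [MetricSpace X] (H : CAT0 X) (x y w : X) (l : ℝ)
    (hl : l ∈ Set.Icc (0:ℝ) 1) :
    dist w (H.W x y l) ^ 2 ≤ (1 - l) * dist w x ^ 2 + l * dist w y ^ 2
      - l * (1 - l) * dist x y ^ 2 := by
  set F : ℝ → ℝ := fun r => dist w (H.W x y r) ^ 2 -
    ((1 - r) * dist w x ^ 2 + r * dist w y ^ 2 - r * (1 - r) * dist x y ^ 2) with hF
  set S : Set ℝ := Set.Icc (0:ℝ) 1 ∩ F ⁻¹' Set.Iic 0 with hSdef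
  have hmem : ∀ r : ℝ, r ∈ S ↔ r ∈ Set.Icc (0:ℝ) 1 ∧
      dist w (H.W x y r) ^ 2 ≤ (1 - r) * dist w x ^ 2 + r * dist w y ^ 2
        - r * (1 - r) * dist x y ^ 2 := by
    intro r
    simp only [hSdef, Set.mem_inter_iff, Set.mem_preimage, Set.mem_Iic, hF, sub_nonpos]
  have hco : ContinuousOn (fun r => dist w (H.W x y r)) (Set.Icc (0:ℝ) 1) := by
    apply LipschitzOnWith.continuousOn (K := ⟨dist x y, dist_nonneg⟩)
    apply LipschitzOnWith.of_dist_le_mul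
    intro p hp q hq
    have h2 := H.W2 x y p q hp hq
    calc dist (dist w (H.W x y p)) (dist w (H.W x y q))
        = |dist (H.W x y p) w - dist (H.W x y q) w| := by
          rw [Real.dist_eq, dist_comm w (H.W x y p), dist_comm w (H.W x y q)]
      _ ≤ dist (H.W x y p) (H.W x y q) := abs_dist_sub_le _ _ _
      _ = |p - q| * dist x y := h2
      _ = dist x y * dist p q := by rw [Real.dist_eq, mul_comm]
  have hclosed : IsClosed S := by
    apply ContinuousOn.preimage_isClosed_of_isClosed _ isClosed_Icc isClosed_Iic
    apply ContinuousOn.sub (hco.pow 2)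
    exact (Continuous.continuousOn (by continuity))
  have hsub : Set.Icc (0:ℝ) 1 ⊆ S := by
    apply icc_subset_of_midpoint_closed hclosed
    · rw [hmem]
      refine ⟨⟨le_refl 0, zero_le_one⟩, ?_⟩
      rw [W_zero H x y]
      linarith [sq_nonneg (dist w x)]
    · rw [hmem]
      refine ⟨⟨zero_le_one, le_refl 1⟩, ?_⟩
      rw [W_one H x y]
      linarith [sq_nonneg (dist w y)]
    · intro a haS b hbS
      rw [hmem] at haS hbS ⊢
      obtain ⟨ha, hia⟩ := haS
      obtain ⟨hb, hib⟩ := hbS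
      refine ⟨⟨by linarith [ha.1, hb.1], by linarith [ha.2, hb.2]⟩, ?_⟩
      have hcn := H.CN (H.W x y a) (H.W x y b) w
      rw [← W_mid H x y ha hb, H.W2 x y a b ha hb, mul_pow, sq_abs] at hcn
      nlinarith [hcn, hia, hib]
  exact ((hmem l).mp (hsub hl)).2

private lemma quadCAT {X : Type*} [MetricSpace X] (H : CAT0 X) (a b c d : X) :
    dist a c ^ 2 + dist b d ^ 2 ≤
      dist a b ^ 2 + dist b c ^ 2 + dist c d ^ 2 + dist d a ^ 2 := by
  have h1 := H.CN a c b
  have h2 := H.CN a c d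
  rw [dist_comm b a] at h1
  rw [dist_comm d (H.W a c (1/2)), dist_comm d c] at h2
  have h3 := dist_triangle b (H.W a c (1/2)) d
  nlinarith [h1, h2, h3, sq_nonneg (dist b (H.W a c (1/2)) - dist (H.W a c (1/2)) d),
    dist_nonneg (x := b) (y := d), dist_nonneg (x := b) (y := H.W a c (1/2)),
    dist_nonneg (x := H.W a c (1/2)) (y := d)]

set_option maxHeartbeats 1000000 in
theorem stmt17 {X : Type*} [MetricSpace X] [CompleteSpace X] (H : CAT0 X) (C : Set X)
    (hC : IsClosed C) (hconv : ∀ x ∈ C, ∀ y ∈ C, ∀ l : ℝ, l ∈ Set.Icc (0:ℝ) 1 → H.W x y l ∈ C)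
    (M : ℕ) (hM : 0 < M) (hdiam : ∀ a ∈ C, ∀ b ∈ C, dist a b ≤ M)
    (T : X → X) (hTC : ∀ x ∈ C, T x ∈ C)
    (hT : ∀ x ∈ C, ∀ y ∈ C, dist (T x) (T y) ≤ dist x y)
    (u : X) (hu : u ∈ C)
    (t : ℕ → ℝ) (ht : ∀ k, t k ∈ Set.Ioo (0:ℝ) 1) (hmono : ∀ k, t (k+1) ≤ t k)
    (z : ℕ → X) (hzC : ∀ k, z k ∈ C) (hz : ∀ k, z k = H.W u (T (z k)) (1 - t k)) :
    ∀ ε : ℝ, 0 < ε → ∀ g : ℕ → ℕ,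
      ∃ K₀ : ℕ, K₀ ≤ (fun k => k + g k)^[⌈(M:ℝ)^2 / ε^2⌉₊] 0 ∧
        ∀ i ∈ Set.Icc K₀ (K₀ + g K₀), ∀ j ∈ Set.Icc K₀ (K₀ + g K₀),
          dist (z i) (z j) ≤ ε := by
  intro ε hε g
  have htmem : ∀ k, (1 - t k) ∈ Set.Icc (0:ℝ) 1 :=
    fun k => ⟨by linarith [(ht k).2], by linarith [(ht k).1]⟩
  have hanti : Antitone t := antitone_nat_of_succ_le hmono
  have huz : ∀ k, dist u (z k) = (1 - t k) * dist u (T (z k)) := by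
    intro k
    have h2 := H.W2 u (T (z k)) 0 (1 - t k) ⟨le_refl 0, zero_le_one⟩ (htmem k)
    rw [W_zero H, ← hz k] at h2
    rw [h2, abs_of_nonpos (by linarith [(ht k).2] : (0:ℝ) - (1 - t k) ≤ 0)]
    ring
  have hzT : ∀ k, dist (z k) (T (z k)) = t k * dist u (T (z k)) := by
    intro k
    have h2 := H.W2 u (T (z k)) (1 - t k) 1 (htmem k) ⟨zero_le_one, le_refl 1⟩
    rw [W_one H, ← hz k] at h2
    rw [h2, abs_of_nonpos (by linarith [(ht k).1] : (1 - t k) - 1 ≤ 0)]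
    ring
  have key : ∀ i j, i ≤ j → dist u (z i) ^ 2 ≤ dist u (z j) ^ 2 ∧
      dist (z i) (z j) ^ 2 ≤ dist u (z j) ^ 2 - dist u (z i) ^ 2 := by
    intro i j hij
    rcases eq_or_lt_of_le (dist_nonneg : (0:ℝ) ≤ dist (z i) (z j)) with hc0 | hc0
    · have hzeq : z i = z j := dist_eq_zero.mp hc0.symm
      rw [hzeq]
      exact ⟨le_refl _, by simp⟩
    · have hst : t j ≤ t i := hanti hij
      obtain ⟨hs0, hs1⟩ := ht j
      obtain ⟨ht0, ht1⟩ := ht i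
      have hI := CNgen H u (T (z j)) (z i) (1 - t j) (htmem j)
      rw [← hz j, dist_comm (z i) u] at hI
      have hII := CNgen H u (T (z i)) (z j) (1 - t i) (htmem i)
      rw [← hz i, dist_comm (z j) u, dist_comm (z j) (z i)] at hII
      have hQ := quadCAT H (z i) (z j) (T (z j)) (T (z i))
      rw [dist_comm (T (z i)) (z i), dist_comm (T (z j)) (T (z i))] at hQ
      have hTij := hT (z i) (hzC i) (z j) (hzC j)
      have hTsq : dist (T (z i)) (T (z j)) ^ 2 ≤ dist (z i) (z j) ^ 2 := by
        nlinarith [dist_nonneg (x := T (z i)) (y := T (z j))]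
      rw [huz i] at hI
      rw [huz j] at hII
      rw [hzT i, hzT j] at hQ
      set s := t j
      set tt := t i
      set A := dist u (T (z i)) with hA
      set B := dist u (T (z j)) with hB
      set c := dist (z i) (z j) with hc
      set P := dist (z i) (T (z j)) with hP
      set Q := dist (z j) (T (z i)) with hQn
      have h1t : (0:ℝ) < 1 - tt := by linarith
      have h1s : (0:ℝ) < 1 - s := by linarith
      have hpos : (0:ℝ) < s + tt - 2 * s * tt := by
        nlinarith [mul_pos hs0 h1t, mul_pos ht0 h1s]
      have hmain : (s + tt - 2 * s * tt) * c ^ 2 ≤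
          (tt - s) * ((1 - s) ^ 2 * B ^ 2 - (1 - tt) ^ 2 * A ^ 2) := by
        nlinarith [mul_le_mul_of_nonneg_left hI h1t.le,
          mul_le_mul_of_nonneg_left hII h1s.le,
          mul_le_mul_of_nonneg_left hQ (mul_nonneg h1s.le h1t.le),
          mul_le_mul_of_nonneg_left hTsq (mul_nonneg h1s.le h1t.le)]
      have hone : (1 - tt) ^ 2 * A ^ 2 ≤ (1 - s) ^ 2 * B ^ 2 := by
        by_contra hcon
        push_neg at hcon
        have hr : (tt - s) * ((1 - s) ^ 2 * B ^ 2 - (1 - tt) ^ 2 * A ^ 2) ≤ 0 :=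
          mul_nonpos_of_nonneg_of_nonpos (by linarith) (by linarith)
        have hl2 : (0:ℝ) < (s + tt - 2 * s * tt) * c ^ 2 := mul_pos hpos (pow_pos hc0 2)
        linarith
      have hco2 : tt - s ≤ s + tt - 2 * s * tt := by
        nlinarith [mul_nonneg hs0.le h1t.le]
      have htwo : c ^ 2 ≤ (1 - s) ^ 2 * B ^ 2 - (1 - tt) ^ 2 * A ^ 2 := by
        have hstep : (s + tt - 2 * s * tt) * c ^ 2 ≤
            (s + tt - 2 * s * tt) * ((1 - s) ^ 2 * B ^ 2 - (1 - tt) ^ 2 * A ^ 2) := by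
          refine le_trans hmain ?_
          apply mul_le_mul_of_nonneg_right hco2 (by linarith)
        exact le_of_mul_le_mul_left hstep hpos
      constructor
      · rw [huz i, huz j]; nlinarith [hone]
      · rw [huz i, huz j]; nlinarith [htwo]
  set N := ⌈(M:ℝ)^2 / ε^2⌉₊ with hN
  have hNpos : 0 < N := Nat.ceil_pos.mpr (by positivity)
  set gt' : ℕ → ℕ := fun k => k + g k with hgt
  have hKsucc : ∀ n, gt'^[n+1] 0 = gt'^[n] 0 + g (gt'^[n] 0) := by
    intro n
    rw [Function.iterate_succ_apply']
  have hKmono : Monotone (fun n => gt'^[n] (0:ℕ)) := by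
    apply monotone_nat_of_le_succ
    intro n
    rw [hKsucc]
    omega
  have hbound : ∀ k, dist u (z k) ≤ (M:ℝ) := fun k => hdiam u hu (z k) (hzC k)
  have hex : ∃ n < N, dist u (z (gt'^[n+1] 0)) ^ 2 ≤ dist u (z (gt'^[n] 0)) ^ 2 + ε ^ 2 := by
    by_contra hcon
    push_neg at hcon
    have hind : ∀ n, n ≤ N → (n:ℝ) * ε ^ 2 ≤ dist u (z (gt'^[n] 0)) ^ 2 := by
      intro n
      induction n with
      | zero => intro _; simpa using sq_nonneg (dist u (z (gt'^[0] 0)))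
      | succ m ih =>
        intro hm
        have h1 := ih (by omega)
        have h2 := hcon m (by omega)
        push_cast
        nlinarith
    have h1 := hind (N - 1) (by omega)
    have h2 := hcon (N - 1) (by omega)
    have hNe : N - 1 + 1 = N := Nat.succ_pred_eq_of_pos hNpos
    rw [hNe] at h2
    have h3 : dist u (z (gt'^[N] 0)) ^ 2 ≤ (M:ℝ) ^ 2 := by
      nlinarith [hbound (gt'^[N] 0), dist_nonneg (x := u) (y := z (gt'^[N] 0))]
    have h4 : (M:ℝ) ^ 2 ≤ (N:ℝ) * ε ^ 2 := by
      have hle := Nat.le_ceil ((M:ℝ)^2 / ε^2)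
      rw [← hN] at hle
      have : (M:ℝ)^2 / ε^2 * ε^2 ≤ (N:ℝ) * ε^2 :=
        mul_le_mul_of_nonneg_right hle (sq_nonneg ε)
      rwa [div_mul_cancel₀ _ (by positivity : ε^2 ≠ 0)] at this
    have hc1 : ((N:ℝ) - 1) * ε ^ 2 ≤ dist u (z (gt'^[N-1] 0)) ^ 2 := by
      have hcast : ((N - 1 : ℕ) : ℝ) = (N:ℝ) - 1 := by
        rw [Nat.cast_sub (by omega : 1 ≤ N)]; norm_num
      rwa [hcast] at h1
    linarith
  obtain ⟨n, hnN, hstep⟩ := hex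
  refine ⟨gt'^[n] 0, hKmono hnN.le, ?_⟩
  intro i hi j hj
  rw [← hKsucc n] at hi hj
  have main : ∀ i' j', i' ∈ Set.Icc (gt'^[n] 0) (gt'^[n+1] 0) →
      j' ∈ Set.Icc (gt'^[n] 0) (gt'^[n+1] 0) → i' ≤ j' → dist (z i') (z j') ≤ ε := by
    intro i' j' hi' hj' hij
    have k1 := (key (gt'^[n] 0) i' hi'.1).1
    have k2 := (key j' (gt'^[n+1] 0) hj'.2).1
    have k3 := (key i' j' hij).2
    have : dist (z i') (z j') ^ 2 ≤ ε ^ 2 := by linarith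
    nlinarith [dist_nonneg (x := z i') (y := z j')]
  rcases le_total i j with hij | hij
  · exact main i j hi hj hij
  · rw [dist_comm]
    exact main j i hj hi hij
end
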